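/- Let w : Ω → (0,∞) be measurable with w ∈ L¹_loc(Ω) and w^{−s} ∈ L¹(Ω) for a continuous s : Ω̄ → (0,∞) with s(x) ≥ 1/(p(x)−1) for all x. Then for any compact K ⊆ Ω, the embedding L^{p(x)}(w,K) ↪ L¹(K) is continuous; that is, there exists c > 0 with ∫_K |u| dx ≤ c |u|_{L^{p(x)}(w,K)} for all u ∈ L^{p(x)}(w,K). -/

import Mathlib

open MeasureTheory Filter Topology

/-- The modular `ρ(u) = ∫_Ω w(x)|u(x)|^{p(x)} dx` on the weighted variable exponent
Lebesgue space. -/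
noncomputable def modular {N : ℕ} (Ω : Set (EuclideanSpace ℝ (Fin N)))
    (w p u : EuclideanSpace ℝ (Fin N) → ℝ) : ℝ :=
  ∫ x in Ω, w x * |u x| ^ p x

/-- The Luxemburg norm on the weighted variable exponent Lebesgue space `L^{p(x)}(w,Ω)`. -/
noncomputable def luxNorm {N : ℕ} (Ω : Set (EuclideanSpace ℝ (Fin N)))
    (w p u : EuclideanSpace ℝ (Fin N) → ℝ) : ℝ :=
  sInf {c : ℝ | 0 < c ∧ ∫ x in Ω, w x * |u x / c| ^ p x ≤ 1}

/-- Membership in `L^{p(x)}(w,Ω)`: `u` is a.e.-measurable with finite modular. -/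
def MemWLp {N : ℕ} (Ω : Set (EuclideanSpace ℝ (Fin N)))
    (w p u : EuclideanSpace ℝ (Fin N) → ℝ) : Prop :=
  AEMeasurable u (volume.restrict Ω) ∧
    Integrable (fun x => w x * |u x| ^ p x) (volume.restrict Ω)

/-!
In place of Hölder's inequality, integrate the pointwise Young-type bound
`t ≤ w t^p + w^{-1/(p-1)} ≤ w t^p + 1 + w^{-s}` at `t = |u/c|` for every admissible `c` in the
Luxemburg norm: this gives `∫_K |u| ≤ c (1 + ∫_K (1 + w^{-s}))`, and the infimum over `c` gives
the embedding constant.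
-/

lemma le_mul_rpow_add_rpow_neg_inv {w t p : ℝ} (hw : 0 < w) (ht : 0 ≤ t) (hp : 1 < p) :
    t ≤ w * t ^ p + w ^ (-(p - 1)⁻¹) := by
  have hp1 : 0 < p - 1 := by linarith
  rcases le_or_gt t (w ^ (-(p - 1)⁻¹)) with hle | hlt
  · linarith [mul_nonneg hw.le (Real.rpow_nonneg ht p)]
  have ht0 : 0 < t := (Real.rpow_nonneg hw.le _).trans_lt hlt
  have hinv : w⁻¹ < t ^ (p - 1) := by
    have := Real.rpow_lt_rpow (Real.rpow_nonneg hw.le _) hlt hp1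
    rwa [← Real.rpow_mul hw.le, neg_mul, inv_mul_cancel₀ hp1.ne', Real.rpow_neg_one] at this
  have hone : 1 < w * t ^ (p - 1) := by
    have := mul_lt_mul_of_pos_left hinv hw
    rwa [mul_inv_cancel₀ hw.ne'] at this
  calc t ≤ t * (w * t ^ (p - 1)) := le_mul_of_one_le_right ht hone.le
    _ = w * t ^ p := by rw [Real.rpow_sub_one ht0.ne']; field_simp
    _ ≤ w * t ^ p + w ^ (-(p - 1)⁻¹) := le_add_of_nonneg_right (Real.rpow_nonneg hw.le _)

lemma rpow_neg_le_one_add_rpow_neg {w e s : ℝ} (hw : 0 < w) (he : 0 ≤ e) (hes : e ≤ s) :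
    w ^ (-e) ≤ 1 + w ^ (-s) := by
  rcases le_total 1 w with h1 | h1
  · linarith [Real.rpow_le_one_of_one_le_of_nonpos h1 (neg_nonpos.2 he),
      Real.rpow_nonneg hw.le (-s)]
  · linarith [Real.rpow_le_rpow_of_exponent_ge hw h1 (neg_le_neg hes)]

lemma le_mul_rpow_add_one_add_rpow_neg {w t p s : ℝ} (hw : 0 < w) (ht : 0 ≤ t) (hp : 1 < p)
    (hsp : 1 / (p - 1) ≤ s) : t ≤ w * t ^ p + (1 + w ^ (-s)) := by
  have he : 0 ≤ (p - 1)⁻¹ := inv_nonneg.2 (by linarith)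
  have hes : (p - 1)⁻¹ ≤ s := by rwa [inv_eq_one_div]
  have := rpow_neg_le_one_add_rpow_neg hw he hes
  linarith [le_mul_rpow_add_rpow_neg_inv hw ht hp]

lemma mul_abs_div_rpow {w a c p : ℝ} (hc : 0 < c) :
    w * |a / c| ^ p = w * |a| ^ p * c ^ (-p) := by
  rw [abs_div, abs_of_pos hc, Real.div_rpow (abs_nonneg a) hc.le, Real.rpow_neg hc.le]
  ring

lemma rpow_neg_le_max_one {c p b : ℝ} (hc : 0 < c) (hp : 0 ≤ p) (hpb : p ≤ b) :
    c ^ (-p) ≤ max 1 (c ^ (-b)) := by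
  rcases le_total 1 c with h1 | h1
  · exact le_max_of_le_left (Real.rpow_le_one_of_one_le_of_nonpos h1 (neg_nonpos.2 hp))
  · exact le_max_of_le_right (Real.rpow_le_rpow_of_exponent_ge hc h1 (neg_le_neg hpb))

section Modular

variable {α : Type*} [MeasurableSpace α] {μ : Measure α} {w p s u : α → ℝ}

lemma Integrable.mul_abs_div_rpow {b c : ℝ}
    (hu : Integrable (fun x => w x * |u x| ^ p x) μ) (hpm : AEMeasurable p μ)
    (hp : ∀ᵐ x ∂μ, 0 ≤ p x) (hpb : ∀ᵐ x ∂μ, p x ≤ b) (hc : 0 < c) :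
    Integrable (fun x => w x * |u x / c| ^ p x) μ := by
  simp_rw [_root_.mul_abs_div_rpow hc]
  refine hu.mul_bdd (c := max 1 (c ^ (-b)))
    (aemeasurable_const.pow hpm.neg).aestronglyMeasurable ?_
  filter_upwards [hp, hpb] with x hpx hpbx
  rw [Real.norm_of_nonneg (Real.rpow_nonneg hc.le _)]
  exact rpow_neg_le_max_one hc hpx hpbx

lemma exists_integral_mul_abs_div_rpow_le_one
    (hu : Integrable (fun x => w x * |u x| ^ p x) μ) (hw : ∀ᵐ x ∂μ, 0 ≤ w x)
    (hp : ∀ᵐ x ∂μ, 1 ≤ p x) :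
    ∃ c, 0 < c ∧ ∫ x, w x * |u x / c| ^ p x ∂μ ≤ 1 := by
  -- `c = ρ(u) + 1` works, since `c^{-p} ≤ 1/c` for `c, p ≥ 1`
  set I := ∫ x, w x * |u x| ^ p x ∂μ
  have hρ0 : ∀ᵐ x ∂μ, 0 ≤ w x * |u x| ^ p x := by
    filter_upwards [hw] with x hwx using mul_nonneg hwx (Real.rpow_nonneg (abs_nonneg _) _)
  have hI : 0 ≤ I := integral_nonneg_of_ae hρ0
  have hc : 0 < I + 1 := by linarith
  have hle : ∀ᵐ x ∂μ, w x * |u x / (I + 1)| ^ p x ≤ w x * |u x| ^ p x * (I + 1)⁻¹ := by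
    filter_upwards [hρ0, hp] with x hρx hpx
    rw [_root_.mul_abs_div_rpow hc, ← Real.rpow_neg_one]
    exact mul_le_mul_of_nonneg_left
      (Real.rpow_le_rpow_of_exponent_le (by linarith) (neg_le_neg hpx)) hρx
  refine ⟨I + 1, hc, ?_⟩
  calc ∫ x, w x * |u x / (I + 1)| ^ p x ∂μ ≤ ∫ x, w x * |u x| ^ p x * (I + 1)⁻¹ ∂μ :=
        integral_mono_of_nonneg
          (by filter_upwards [hw] with x hwx
                using mul_nonneg hwx (Real.rpow_nonneg (abs_nonneg _) _))
          (hu.mul_const _) hle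
    _ = I / (I + 1) := by rw [integral_mul_const, div_eq_mul_inv]
    _ ≤ 1 := (div_le_one hc).2 (by linarith)

lemma integral_one_add_rpow_neg_nonneg (hw : ∀ᵐ x ∂μ, 0 ≤ w x) :
    0 ≤ ∫ x, (1 + w x ^ (-s x)) ∂μ :=
  integral_nonneg_of_ae <| by
    filter_upwards [hw] with x hwx using add_nonneg zero_le_one (Real.rpow_nonneg hwx _)

lemma integral_abs_le_of_integral_mul_rpow_le_one [IsFiniteMeasure μ]
    (hw : ∀ᵐ x ∂μ, 0 < w x) (hp : ∀ᵐ x ∂μ, 1 < p x) (hsp : ∀ᵐ x ∂μ, 1 / (p x - 1) ≤ s x)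
    (hws : Integrable (fun x => w x ^ (-s x)) μ)
    (hu : Integrable (fun x => w x * |u x| ^ p x) μ) (hρ : ∫ x, w x * |u x| ^ p x ∂μ ≤ 1) :
    ∫ x, |u x| ∂μ ≤ 1 + ∫ x, (1 + w x ^ (-s x)) ∂μ := by
  have hws' : Integrable (fun x => 1 + w x ^ (-s x)) μ := (integrable_const 1).add hws
  calc ∫ x, |u x| ∂μ ≤ ∫ x, (w x * |u x| ^ p x + (1 + w x ^ (-s x))) ∂μ := by
        refine integral_mono_of_nonneg (ae_of_all _ fun x => abs_nonneg _) (hu.add hws') ?_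
        filter_upwards [hw, hp, hsp] with x hwx hpx hspx
        exact le_mul_rpow_add_one_add_rpow_neg hwx (abs_nonneg _) hpx hspx
    _ ≤ 1 + ∫ x, (1 + w x ^ (-s x)) ∂μ := by
        rw [integral_add hu hws']
        gcongr

end Modular

lemma integral_abs_le_mul_luxNorm {N : ℕ} {K : Set (EuclideanSpace ℝ (Fin N))}
    {w p s u : EuclideanSpace ℝ (Fin N) → ℝ} {b : ℝ} (hK : volume K ≠ ⊤)
    (hw : ∀ᵐ x ∂volume.restrict K, 0 < w x) (hpm : AEMeasurable p (volume.restrict K))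
    (hp : ∀ᵐ x ∂volume.restrict K, 1 < p x) (hpb : ∀ᵐ x ∂volume.restrict K, p x ≤ b)
    (hsp : ∀ᵐ x ∂volume.restrict K, 1 / (p x - 1) ≤ s x)
    (hws : IntegrableOn (fun x => w x ^ (-s x)) K)
    (hu : IntegrableOn (fun x => w x * |u x| ^ p x) K) :
    ∫ x in K, |u x| ≤ (1 + ∫ x in K, (1 + w x ^ (-s x))) * luxNorm K w p u := by
  have : IsFiniteMeasure (volume.restrict K) := isFiniteMeasure_restrict.2 hK
  set C := 1 + ∫ x in K, (1 + w x ^ (-s x))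
  have hC : 0 < C := by
    linarith [integral_one_add_rpow_neg_nonneg (s := s) (hw.mono fun x hx => hx.le)]
  have hp0 : ∀ᵐ x ∂volume.restrict K, 0 ≤ p x := by
    filter_upwards [hp] with x hpx using by linarith
  have hbound : ∀ c, 0 < c → ∫ x in K, w x * |u x / c| ^ p x ≤ 1 → ∫ x in K, |u x| ≤ C * c := by
    intro c hc hρ
    have := integral_abs_le_of_integral_mul_rpow_le_one hw hp hsp hws
      (Integrable.mul_abs_div_rpow hu hpm hp0 hpb hc) hρ
    calc ∫ x in K, |u x| = c * ∫ x in K, |u x / c| := by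
          rw [← integral_const_mul]
          congr 1 with x
          rw [abs_div, abs_of_pos hc, mul_div_cancel₀ _ hc.ne']
      _ ≤ c * C := by gcongr
      _ = C * c := mul_comm _ _
  have hne := exists_integral_mul_abs_div_rpow_le_one hu (hw.mono fun x hx => hx.le)
    (hp.mono fun x hx => hx.le)
  rw [← div_le_iff₀' hC]
  exact le_csInf hne fun c ⟨hc, hρ⟩ => (div_le_iff₀' hC).2 (hbound c hc hρ)

theorem stmt17_general {N : ℕ} (Ω : Set (EuclideanSpace ℝ (Fin N)))
    (p s w : EuclideanSpace ℝ (Fin N) → ℝ)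
    (hpcont : ContinuousOn p (closure Ω)) (hp : ∀ x ∈ closure Ω, 1 < p x)
    (hsp : ∀ x ∈ closure Ω, 1 / (p x - 1) ≤ s x)
    (hwpos : ∀ᵐ x ∂(volume.restrict Ω), 0 < w x)
    (hws : Integrable (fun x => w x ^ (-(s x))) (volume.restrict Ω))
    (K : Set (EuclideanSpace ℝ (Fin N))) (hK : IsCompact K) (hKΩ : K ⊆ Ω) :
    ∃ c : ℝ, 0 < c ∧ ∀ u : EuclideanSpace ℝ (Fin N) → ℝ,
      MemWLp K w p u → ∫ x in K, |u x| ≤ c * luxNorm K w p u := by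
  have hKcl : K ⊆ closure Ω := hKΩ.trans subset_closure
  have hwK : ∀ᵐ x ∂volume.restrict K, 0 < w x := ae_restrict_of_ae_restrict_of_subset hKΩ hwpos
  obtain ⟨b, hb⟩ := hK.exists_bound_of_continuousOn (hpcont.mono hKcl)
  refine ⟨1 + ∫ x in K, (1 + w x ^ (-s x)), ?_, fun u hu => ?_⟩
  · linarith [integral_one_add_rpow_neg_nonneg (s := s) (hwK.mono fun x hx => hx.le)]
  exact integral_abs_le_mul_luxNorm hK.measure_lt_top.ne hwK
    ((hpcont.mono hKcl).aemeasurable hK.measurableSet)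
    (ae_restrict_of_forall_mem hK.measurableSet fun x hx => hp x (hKcl hx))
    (ae_restrict_of_forall_mem hK.measurableSet fun x hx => (le_abs_self _).trans (hb x hx))
    (ae_restrict_of_forall_mem hK.measurableSet fun x hx => hsp x (hKcl hx))
    (IntegrableOn.mono_set hws hKΩ) hu.2

/-- Under (w1)-type assumptions (`w ∈ L¹_loc(Ω)`, `w^{−s} ∈ L¹(Ω)` with
`s(x) ≥ 1/(p(x)−1)`), for any compact `K ⊆ Ω` the embedding
`L^{p(x)}(w,K) ↪ L¹(K)` is continuous. -/
theorem stmt17 {N : ℕ} (Ω : Set (EuclideanSpace ℝ (Fin N))) (hΩopen : IsOpen Ω)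
    (hΩbdd : Bornology.IsBounded Ω)
    (p s w : EuclideanSpace ℝ (Fin N) → ℝ)
    (hpcont : ContinuousOn p (closure Ω)) (hp : ∀ x ∈ closure Ω, 1 < p x)
    (hscont : ContinuousOn s (closure Ω)) (hs : ∀ x ∈ closure Ω, 0 < s x)
    (hsp : ∀ x ∈ closure Ω, 1 / (p x - 1) ≤ s x)
    (hwpos : ∀ᵐ x ∂(volume.restrict Ω), 0 < w x)
    (hwloc : LocallyIntegrableOn w Ω)
    (hws : Integrable (fun x => w x ^ (-(s x))) (volume.restrict Ω))
    (K : Set (EuclideanSpace ℝ (Fin N))) (hK : IsCompact K) (hKΩ : K ⊆ Ω) :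
    ∃ c : ℝ, 0 < c ∧ ∀ u : EuclideanSpace ℝ (Fin N) → ℝ,
      MemWLp K w p u → ∫ x in K, |u x| ≤ c * luxNorm K w p u :=
  stmt17_general Ω p s w hpcont hp hsp hwpos hws K hK hKΩ
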